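/- The logic mCi is not axiomatizable by a finite Set-Set Hilbert system: assuming that the Set-Fmla companion of ⊩_{M_mCi} coincides with ⊢_{H_mCi}, there is no finite Set-Set Hilbert system H over Σ such that ⊢_H = ⊩_{M_mCi}. -/
import Mathlib


/-- Formulas over the signature Σ with unary ¬, ∘ and binary ∧, ∨, →,
freely generated from a denumerable set of propositional variables. -/
inductive Fm : Type where
  | var : ℕ → Fm
  | neg : Fm → Fm
  | circ : Fm → Fm
  | conj : Fm → Fm → Fm
  | disj : Fm → Fm → Fm
  | imp : Fm → Fm → Fm
deriving DecidableEq

/-- Substitutions act homomorphically on formulas. -/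
def subst (σ : ℕ → Fm) : Fm → Fm
  | .var n => σ n
  | .neg φ => .neg (subst σ φ)
  | .circ φ => .circ (subst σ φ)
  | .conj φ ψ => .conj (subst σ φ) (subst σ ψ)
  | .disj φ ψ => .disj (subst σ φ) (subst σ ψ)
  | .imp φ ψ => .imp (subst σ φ) (subst σ ψ)

/-- A Set-Fmla rule schema: a finite antecedent and a single succedent formula. -/
abbrev Rule : Type := Finset Fm × Fm

/-- Derivability in a Set-Fmla Hilbert system: `Derives H Γ φ` holds iff φ can be
obtained from members of Γ by finitely many applications of substitution instances
of rules of `H`. -/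
inductive Derives (H : Set Rule) : Set Fm → Fm → Prop where
  | prem : ∀ {Γ : Set Fm} {φ : Fm}, φ ∈ Γ → Derives H Γ φ
  | rule : ∀ {Γ : Set Fm} (r : Rule) (σ : ℕ → Fm), r ∈ H →
      (∀ ψ ∈ r.1, Derives H Γ (subst σ ψ)) → Derives H Γ (subst σ r.2)

/-- Iterated negation: `negIter j φ = ¬^j φ`. -/
def negIter : ℕ → Fm → Fm
  | 0, φ => φ
  | n + 1, φ => .neg (negIter n φ)

/-- (Ax10)  p ∨ ¬p. -/
def ax10 : Fm := .disj (.var 0) (.neg (.var 0))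
/-- (bc1)  ∘p → (p → (¬p → q)). -/
def bc1 : Fm := .imp (.circ (.var 0)) (.imp (.var 0) (.imp (.neg (.var 0)) (.var 1)))
/-- (ci)  ¬∘p → (p ∧ ¬p). -/
def ci : Fm := .imp (.neg (.circ (.var 0))) (.conj (.var 0) (.neg (.var 0)))
/-- (ci_j)  ∘¬^j∘p. -/
def cij (j : ℕ) : Fm := .circ (negIter j (.circ (.var 0)))

/-- `HmCi B` : the Hilbert system extending the positive-classical base `B`
with (Ax10), (bc1), (ci) and (ci_j) for every j ≥ 0. -/
def HmCi (B : Set Rule) : Set Rule :=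
  B ∪ {(∅, ax10), (∅, bc1), (∅, ci)} ∪ {r : Rule | ∃ j : ℕ, r = (∅, cij j)}

/-- `HkSys B k` : the Hilbert system extending the positive-classical base `B`
with (Ax10), (bc1), (ci) and (ci_j) for 0 ≤ j ≤ k only. -/
def HkSys (B : Set Rule) (k : ℕ) : Set Rule :=
  B ∪ {(∅, ax10), (∅, bc1), (∅, ci)} ∪ {r : Rule | ∃ j ≤ k, r = (∅, cij j)}

/-- Carrier V_k = {1,…,2(k+1)} of the matrix M_k. -/
def Vk (k : ℕ) : Set ℕ := {x | 1 ≤ x ∧ x ≤ 2 * (k + 1)}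
/-- Designated set D_k = {k+2,…,2(k+1)} of the matrix M_k. -/
def Dk (k : ℕ) : Set ℕ := {x | k + 2 ≤ x ∧ x ≤ 2 * (k + 1)}

instance (k x : ℕ) : Decidable (x ∈ Dk k) :=
  inferInstanceAs (Decidable (k + 2 ≤ x ∧ x ≤ 2 * (k + 1)))

/-- Disjunction of M_k: 1 if both arguments are undesignated, k+2 otherwise. -/
def mOr (k x y : ℕ) : ℕ := if x ∉ Dk k ∧ y ∉ Dk k then 1 else k + 2
/-- Conjunction of M_k: k+2 if both arguments are designated, 1 otherwise. -/
def mAnd (k x y : ℕ) : ℕ := if x ∈ Dk k ∧ y ∈ Dk k then k + 2 else 1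
/-- Implication of M_k: 1 if the first argument is designated and the second is not,
k+2 otherwise. -/
def mImp (k x y : ℕ) : ℕ := if x ∈ Dk k ∧ y ∉ Dk k then 1 else k + 2
/-- Consistency operator of M_k: 1 at 2(k+1), k+2 elsewhere. -/
def mCirc (k x : ℕ) : ℕ := if x = 2 * (k + 1) then 1 else k + 2
/-- Negation of M_k: ¬x = k+2 if x ∈ {1, 2(k+1)}; ¬x = x + (k+1) if 2 ≤ x ≤ k+1;
¬x = x − k if k+2 ≤ x ≤ 2k+1 (values outside the carrier are irrelevant). -/
def mNeg (k x : ℕ) : ℕ :=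
  if x = 1 ∨ x = 2 * (k + 1) then k + 2
  else if 2 ≤ x ∧ x ≤ k + 1 then x + (k + 1)
  else if k + 2 ≤ x ∧ x ≤ 2 * k + 1 then x - k
  else x

/-- Classical conjunction on the two-element Boolean matrix B₂ (carrier {0,1}). -/
def b2And (x y : ℕ) : ℕ := if x = 1 ∧ y = 1 then 1 else 0
/-- Classical disjunction on B₂. -/
def b2Or (x y : ℕ) : ℕ := if x = 1 ∨ y = 1 then 1 else 0
/-- Classical implication on B₂. -/
def b2Imp (x y : ℕ) : ℕ := if x = 1 ∧ y = 0 then 0 else 1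
/-- The map h : V_k → {0,1} sending designated values to 1 and the rest to 0. -/
def hmap (k x : ℕ) : ℕ := if x ∈ Dk k then 1 else 0

/-- Homomorphic valuations on the matrix M_k. -/
def IsValMk (k : ℕ) (v : Fm → ℕ) : Prop :=
  (∀ φ : Fm, v φ ∈ Vk k) ∧
  (∀ φ ψ : Fm, v (.conj φ ψ) = mAnd k (v φ) (v ψ)) ∧
  (∀ φ ψ : Fm, v (.disj φ ψ) = mOr k (v φ) (v ψ)) ∧
  (∀ φ ψ : Fm, v (.imp φ ψ) = mImp k (v φ) (v ψ)) ∧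
  (∀ φ : Fm, v (.neg φ) = mNeg k (v φ)) ∧
  (∀ φ : Fm, v (.circ φ) = mCirc k (v φ))

/-- Valuations on the two-element Boolean matrix B₂ over the signature {∧,∨,→}:
maps into {0,1} commuting with the positive connectives. -/
def IsValB2 (v : Fm → ℕ) : Prop :=
  (∀ φ : Fm, v φ = 0 ∨ v φ = 1) ∧
  (∀ φ ψ : Fm, v (.conj φ ψ) = b2And (v φ) (v ψ)) ∧
  (∀ φ ψ : Fm, v (.disj φ ψ) = b2Or (v φ) (v ψ)) ∧
  (∀ φ ψ : Fm, v (.imp φ ψ) = b2Imp (v φ) (v ψ))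

/-- A rule is sound for B₂ when every B₂-valuation designating all its premises
designates its conclusion. -/
def SoundB2 (r : Rule) : Prop :=
  ∀ v : Fm → ℕ, IsValB2 v → (∀ ψ ∈ r.1, v ψ = 1) → v r.2 = 1

/-- Positive formulas: built from variables using only ∧, ∨, →. -/
inductive Positive : Fm → Prop where
  | var : ∀ n : ℕ, Positive (.var n)
  | conj : ∀ {φ ψ : Fm}, Positive φ → Positive ψ → Positive (.conj φ ψ)
  | disj : ∀ {φ ψ : Fm}, Positive φ → Positive ψ → Positive (.disj φ ψ)
  | imp : ∀ {φ ψ : Fm}, Positive φ → Positive ψ → Positive (.imp φ ψ)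

/-- The five truth-values of the nd-matrix M_mCi. -/
inductive V5 : Type where
  | f | F | I | T | t
deriving DecidableEq

/-- The designated values D₅ = {I, T, t}. -/
def D5 : Set V5 := {x | x = V5.I ∨ x = V5.T ∨ x = V5.t}

instance (x : V5) : Decidable (x ∈ D5) :=
  inferInstanceAs (Decidable (x = V5.I ∨ x = V5.T ∨ x = V5.t))

/-- Non-deterministic conjunction of M_mCi. -/
def nAnd (x y : V5) : Set V5 :=
  if x ∈ D5 ∧ y ∈ D5 then {V5.I, V5.t} else {V5.f}
/-- Non-deterministic disjunction of M_mCi. -/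
def nOr (x y : V5) : Set V5 :=
  if x ∈ D5 ∨ y ∈ D5 then {V5.I, V5.t} else {V5.f}
/-- Non-deterministic implication of M_mCi. -/
def nImp (x y : V5) : Set V5 :=
  if x ∉ D5 ∨ y ∈ D5 then {V5.I, V5.t} else {V5.f}
/-- Non-deterministic negation of M_mCi. -/
def nNeg : V5 → Set V5
  | V5.f => {V5.I, V5.t}
  | V5.F => {V5.T}
  | V5.I => {V5.I, V5.t}
  | V5.T => {V5.F}
  | V5.t => {V5.f}
/-- Non-deterministic consistency operator of M_mCi. -/
def nCirc : V5 → Set V5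
  | V5.I => {V5.F}
  | _ => {V5.T}

/-- Valuations on the nd-matrix M_mCi. -/
def IsVal5 (v : Fm → V5) : Prop :=
  (∀ φ ψ : Fm, v (.conj φ ψ) ∈ nAnd (v φ) (v ψ)) ∧
  (∀ φ ψ : Fm, v (.disj φ ψ) ∈ nOr (v φ) (v ψ)) ∧
  (∀ φ ψ : Fm, v (.imp φ ψ) ∈ nImp (v φ) (v ψ)) ∧
  (∀ φ : Fm, v (.neg φ) ∈ nNeg (v φ)) ∧
  (∀ φ : Fm, v (.circ φ) ∈ nCirc (v φ))

/-- The Set-Set entailment relation ⊩ determined by M_mCi. -/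
def Ent5 (Γ Δ : Set Fm) : Prop :=
  ∀ v : Fm → V5, IsVal5 v → (∀ φ ∈ Γ, v φ ∈ D5) → ∃ δ ∈ Δ, v δ ∈ D5

/-- A Set-Set rule schema: a finite antecedent and a finite succedent. -/
abbrev RuleSS : Type := Finset Fm × Finset Fm

/-- Derivability in a Set-Set Hilbert system (inductive rendering of the
tree-style derivations): a branch closes when the current label meets the
succedent `Δ`, and applying a rule instance whose antecedent is contained in the
current label opens one branch per formula of its succedent (none when the
succedent is empty, corresponding to a ∗-discontinued branch). -/
inductive DerSS (H : Set RuleSS) : Set Fm → Set Fm → Prop where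
  | close : ∀ {Γ Δ : Set Fm} {φ : Fm}, φ ∈ Γ → φ ∈ Δ → DerSS H Γ Δ
  | rule : ∀ {Γ Δ : Set Fm} (r : RuleSS) (σ : ℕ → Fm), r ∈ H →
      (∀ ψ ∈ r.1, subst σ ψ ∈ Γ) →
      (∀ ω ∈ r.2, DerSS H (Γ ∪ {subst σ ω}) Δ) → DerSS H Γ Δ

namespace Stmt16Aux

/-- Size of a formula. -/
def fsize : Fm → ℕ
  | .var _ => 1
  | .neg φ => fsize φ + 1
  | .circ φ => fsize φ + 1
  | .conj φ ψ => fsize φ + fsize ψ + 1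
  | .disj φ ψ => fsize φ + fsize ψ + 1
  | .imp φ ψ => fsize φ + fsize ψ + 1

lemma mem_Dk {k x : ℕ} : x ∈ Dk k ↔ k + 2 ≤ x ∧ x ≤ 2 * (k + 1) := Iff.rfl
lemma mem_Vk {k x : ℕ} : x ∈ Vk k ↔ 1 ≤ x ∧ x ≤ 2 * (k + 1) := Iff.rfl

/-- The ¬-orbit of 1 in M_k. -/
def cseq (k : ℕ) : ℕ → ℕ
  | 0 => 1
  | n + 1 => mNeg k (cseq k n)

lemma cseq_one (k : ℕ) : cseq k 1 = k + 2 := by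
  show mNeg k (cseq k 0) = k + 2
  simp only [cseq, mNeg]
  split_ifs <;> simp_all <;> omega

lemma cseq_spec (k : ℕ) : ∀ i ≤ k, cseq k (2 * i) = i + 1 ∧ cseq k (2 * i + 1) = k + 2 + i := by
  intro i
  induction i with
  | zero =>
    intro _
    exact ⟨by simp [cseq], by simpa using cseq_one k⟩
  | succ i ih =>
    intro hi
    obtain ⟨h1, h2⟩ := ih (by omega)
    have e1 : cseq k (2 * (i + 1)) = mNeg k (k + 2 + i) := by
      have h : 2 * (i + 1) = (2 * i + 1) + 1 := by omega
      rw [h]; show mNeg k (cseq k (2 * i + 1)) = _; rw [h2]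
    have e1' : cseq k (2 * (i + 1)) = i + 2 := by
      rw [e1]; simp only [mNeg]; split_ifs <;> simp_all <;> omega
    refine ⟨e1', ?_⟩
    show mNeg k (cseq k (2 * (i + 1))) = _
    rw [e1']; simp only [mNeg]; split_ifs <;> simp_all <;> omega

lemma cseq_even_le {k n : ℕ} (h2 : n % 2 = 0) (hn : n ≤ 2 * k) : cseq k n ≤ k + 1 := by
  obtain ⟨i, rfl⟩ : ∃ i, n = 2 * i := ⟨n / 2, by omega⟩
  have := (cseq_spec k i (by omega)).1
  omega

lemma cseq_odd_mem {k n : ℕ} (h2 : n % 2 = 1) (hn : n ≤ 2 * k) :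
    k + 2 ≤ cseq k n ∧ cseq k n ≤ 2 * k + 1 := by
  obtain ⟨i, rfl⟩ : ∃ i, n = 2 * i + 1 := ⟨n / 2, by omega⟩
  have := (cseq_spec k i (by omega)).2
  omega

lemma mNeg_low {k x : ℕ} (h1 : 1 ≤ x) (h2 : x ≤ k + 1) :
    k + 2 ≤ mNeg k x ∧ mNeg k x ≤ 2 * (k + 1) := by
  simp only [mNeg]; split_ifs <;> simp_all <;> omega

lemma mNeg_high {k x : ℕ} (h1 : k + 2 ≤ x) (h2 : x ≤ 2 * k + 1) :
    2 ≤ mNeg k x ∧ mNeg k x ≤ k + 1 := by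
  simp only [mNeg]; split_ifs <;> simp_all <;> omega

lemma mNeg_top {k : ℕ} (hk : 1 ≤ k) : mNeg k (2 * (k + 1)) = k + 2 := by
  simp only [mNeg]; split_ifs <;> simp_all <;> omega

/-- The simulating valuation on M_mCi built from an M_k valuation. -/
def wval (k : ℕ) (u : Fm → ℕ) : Fm → V5
  | .var n => if u (.var n) = 2 * (k + 1) then .I else if u (.var n) ∈ Dk k then .t else .f
  | .neg φ =>
      match wval k u φ with
      | .F => .T
      | .T => .F
      | .t => .f
      | _ => if u (.neg φ) = 2 * (k + 1) then .I else .t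
  | .circ φ => if wval k u φ = .I then .F else .T
  | .conj φ ψ => if wval k u φ ∈ D5 ∧ wval k u ψ ∈ D5 then .t else .f
  | .disj φ ψ => if wval k u φ ∈ D5 ∨ wval k u ψ ∈ D5 then .t else .f
  | .imp φ ψ => if wval k u φ ∉ D5 ∨ wval k u ψ ∈ D5 then .t else .f

lemma isVal5_wval (k : ℕ) (u : Fm → ℕ) : IsVal5 (wval k u) := by
  refine ⟨?_, ?_, ?_, ?_, ?_⟩
  · intro φ ψ
    show (if wval k u φ ∈ D5 ∧ wval k u ψ ∈ D5 then V5.t else V5.f) ∈ _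
    unfold nAnd; split_ifs with h h' h' <;> simp_all
  · intro φ ψ
    show (if wval k u φ ∈ D5 ∨ wval k u ψ ∈ D5 then V5.t else V5.f) ∈ _
    unfold nOr; split_ifs with h h' h' <;> simp_all
  · intro φ ψ
    show (if wval k u φ ∉ D5 ∨ wval k u ψ ∈ D5 then V5.t else V5.f) ∈ _
    unfold nImp; split_ifs with h h' h' <;> simp_all
  · intro φ
    show (match wval k u φ with
      | .F => V5.T | .T => V5.F | .t => V5.f
      | _ => if u (.neg φ) = 2 * (k + 1) then V5.I else V5.t) ∈ nNeg (wval k u φ)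
    cases wval k u φ <;> (try split_ifs) <;> simp [nNeg]
  · intro φ
    show (if wval k u φ = .I then V5.F else V5.T) ∈ nCirc (wval k u φ)
    cases h : wval k u φ <;> simp [nCirc]

/-- The designation-simulation invariant. -/
def Inv (k : ℕ) (u : Fm → ℕ) (φ : Fm) : Prop :=
  (wval k u φ = .f → u φ ∉ Dk k) ∧
  (wval k u φ = .t → u φ ∈ Dk k ∧ u φ ≠ 2 * (k + 1)) ∧
  (wval k u φ = .I → u φ = 2 * (k + 1)) ∧
  (wval k u φ = .F → ∃ n, n % 2 = 0 ∧ n ≤ fsize φ ∧ u φ = cseq k n) ∧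
  (wval k u φ = .T → ∃ n, n % 2 = 1 ∧ n ≤ fsize φ ∧ u φ = cseq k n)

lemma Inv_f {k u φ} (hw : wval k u φ = .f) (h : u φ ∉ Dk k) : Inv k u φ := by
  refine ⟨?_, ?_, ?_, ?_, ?_⟩ <;> rw [hw] <;> intro h' <;> first | exact h | simp_all

lemma Inv_t {k u φ} (hw : wval k u φ = .t) (h1 : u φ ∈ Dk k) (h2 : u φ ≠ 2 * (k + 1)) :
    Inv k u φ := by
  refine ⟨?_, ?_, ?_, ?_, ?_⟩ <;> rw [hw] <;> intro h' <;> first | exact ⟨h1, h2⟩ | simp_all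

lemma Inv_I {k u φ} (hw : wval k u φ = .I) (h : u φ = 2 * (k + 1)) : Inv k u φ := by
  refine ⟨?_, ?_, ?_, ?_, ?_⟩ <;> rw [hw] <;> intro h' <;> first | exact h | simp_all

lemma Inv_F {k u φ} (hw : wval k u φ = .F)
    (h : ∃ n, n % 2 = 0 ∧ n ≤ fsize φ ∧ u φ = cseq k n) : Inv k u φ := by
  refine ⟨?_, ?_, ?_, ?_, ?_⟩ <;> rw [hw] <;> intro h' <;> first | exact h | simp_all

lemma Inv_T {k u φ} (hw : wval k u φ = .T)
    (h : ∃ n, n % 2 = 1 ∧ n ≤ fsize φ ∧ u φ = cseq k n) : Inv k u φ := by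
  refine ⟨?_, ?_, ?_, ?_, ?_⟩ <;> rw [hw] <;> intro h' <;> first | exact h | simp_all

lemma inv_desig {k : ℕ} {u : Fm → ℕ} {φ : Fm} (hinv : Inv k u φ) (hsz : fsize φ ≤ 2 * k) :
    (wval k u φ ∈ D5 ↔ u φ ∈ Dk k) := by
  obtain ⟨hf, ht, hI, hF, hT⟩ := hinv
  cases h : wval k u φ
  · have := hf h; simp [D5]; tauto
  · obtain ⟨n, hn2, hnle, hcn⟩ := hF h
    have := cseq_even_le hn2 (le_trans hnle hsz)
    simp [D5, mem_Dk]; omega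
  · have := hI h; simp [D5, mem_Dk]; omega
  · obtain ⟨n, hn2, hnle, hcn⟩ := hT h
    have := cseq_odd_mem hn2 (le_trans hnle hsz)
    simp [D5, mem_Dk]; omega
  · obtain ⟨h1, h2⟩ := ht h
    rw [mem_Dk] at h1
    simp [D5, mem_Dk]; omega

lemma inv_all {k : ℕ} (hk : 1 ≤ k) {u : Fm → ℕ} (hu : IsValMk k u) :
    ∀ φ : Fm, fsize φ ≤ 2 * k → Inv k u φ := by
  obtain ⟨hVk, hAnd, hOr, hImp, hNeg, hCirc⟩ := hu
  intro φ
  induction φ with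
  | var n =>
    intro _
    have hv := hVk (.var n); rw [mem_Vk] at hv
    have hw : wval k u (.var n) =
        (if u (.var n) = 2 * (k + 1) then V5.I
         else if u (.var n) ∈ Dk k then V5.t else V5.f) := rfl
    by_cases h1 : u (.var n) = 2 * (k + 1)
    · exact Inv_I (by rw [hw, if_pos h1]) h1
    · by_cases h2 : u (.var n) ∈ Dk k
      · exact Inv_t (by rw [hw, if_neg h1, if_pos h2]) h2 h1
      · exact Inv_f (by rw [hw, if_neg h1, if_neg h2]) h2
  | neg φ ih =>
    intro hsz
    have hszφ : fsize φ ≤ 2 * k := by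
      have : fsize (Fm.neg φ) = fsize φ + 1 := rfl
      omega
    have hinv := ih hszφ
    obtain ⟨hf, ht, hI, hF, hT⟩ := hinv
    have hun : u (.neg φ) = mNeg k (u φ) := hNeg φ
    have hvφ := hVk φ; rw [mem_Vk] at hvφ
    have hszn : fsize (Fm.neg φ) = fsize φ + 1 := rfl
    cases hwφ : wval k u φ with
    | f =>
      have hu1 := hf hwφ
      rw [mem_Dk] at hu1
      have hw : wval k u (.neg φ) = (if u (.neg φ) = 2 * (k + 1) then V5.I else V5.t) := by
        show (match wval k u φ with
          | .F => V5.T | .T => V5.F | .t => V5.f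
          | _ => if u (.neg φ) = 2 * (k + 1) then V5.I else V5.t) = _
        rw [hwφ]
      have hlow := mNeg_low (k := k) (x := u φ) (by omega) (by omega)
      by_cases hc : u (.neg φ) = 2 * (k + 1)
      · exact Inv_I (by rw [hw, if_pos hc]) hc
      · refine Inv_t (by rw [hw, if_neg hc]) ?_ hc
        rw [mem_Dk, hun]; omega
    | t =>
      obtain ⟨hu1, hu2⟩ := ht hwφ
      rw [mem_Dk] at hu1
      have hw : wval k u (.neg φ) = V5.f := by
        show (match wval k u φ with
          | .F => V5.T | .T => V5.F | .t => V5.f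
          | _ => if u (.neg φ) = 2 * (k + 1) then V5.I else V5.t) = _
        rw [hwφ]
      have hhigh := mNeg_high (k := k) (x := u φ) (by omega) (by omega)
      refine Inv_f hw ?_
      rw [mem_Dk, hun]; omega
    | I =>
      have hu1 := hI hwφ
      have hw : wval k u (.neg φ) = (if u (.neg φ) = 2 * (k + 1) then V5.I else V5.t) := by
        show (match wval k u φ with
          | .F => V5.T | .T => V5.F | .t => V5.f
          | _ => if u (.neg φ) = 2 * (k + 1) then V5.I else V5.t) = _
        rw [hwφ]
      have hval : u (.neg φ) = k + 2 := by rw [hun, hu1, mNeg_top hk]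
      have hc : ¬ (u (.neg φ) = 2 * (k + 1)) := by omega
      refine Inv_t (by rw [hw, if_neg hc]) ?_ hc
      rw [mem_Dk]; omega
    | F =>
      obtain ⟨n, hn2, hnle, hcn⟩ := hF hwφ
      have hw : wval k u (.neg φ) = V5.T := by
        show (match wval k u φ with
          | .F => V5.T | .T => V5.F | .t => V5.f
          | _ => if u (.neg φ) = 2 * (k + 1) then V5.I else V5.t) = _
        rw [hwφ]
      refine Inv_T hw ⟨n + 1, by omega, by omega, ?_⟩
      rw [hun, hcn]; rfl
    | T =>
      obtain ⟨n, hn2, hnle, hcn⟩ := hT hwφ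
      have hw : wval k u (.neg φ) = V5.F := by
        show (match wval k u φ with
          | .F => V5.T | .T => V5.F | .t => V5.f
          | _ => if u (.neg φ) = 2 * (k + 1) then V5.I else V5.t) = _
        rw [hwφ]
      refine Inv_F hw ⟨n + 1, by omega, by omega, ?_⟩
      rw [hun, hcn]; rfl
  | circ φ ih =>
    intro hsz
    have hszφ : fsize φ ≤ 2 * k := by
      have : fsize (Fm.circ φ) = fsize φ + 1 := rfl
      omega
    have hinv := ih hszφ
    obtain ⟨hf, ht, hI, hF, hT⟩ := hinv
    have hun : u (.circ φ) = mCirc k (u φ) := hCirc φ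
    have hszn : fsize (Fm.circ φ) = fsize φ + 1 := rfl
    have hw : wval k u (.circ φ) = (if wval k u φ = .I then V5.F else V5.T) := rfl
    -- key: u φ ≠ 2(k+1) unless wval φ = I
    cases hwφ : wval k u φ with
    | I =>
      have hu1 := hI hwφ
      have : u (.circ φ) = 1 := by rw [hun, hu1]; simp [mCirc]
      refine Inv_F (by rw [hw, if_pos hwφ]) ⟨0, by omega, by omega, by rw [this]; rfl⟩
    | f =>
      have hu1 := hf hwφ
      have hne : u φ ≠ 2 * (k + 1) := fun h => hu1 (by rw [mem_Dk]; omega)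
      have : u (.circ φ) = k + 2 := by rw [hun]; simp [mCirc, hne]
      refine Inv_T (by rw [hw, if_neg (by rw [hwφ]; simp)])
        ⟨1, by omega, by omega, by rw [this, cseq_one]⟩
    | t =>
      obtain ⟨_, hne⟩ := ht hwφ
      have : u (.circ φ) = k + 2 := by rw [hun]; simp [mCirc, hne]
      refine Inv_T (by rw [hw, if_neg (by rw [hwφ]; simp)])
        ⟨1, by omega, by omega, by rw [this, cseq_one]⟩
    | F =>
      obtain ⟨n, hn2, hnle, hcn⟩ := hF hwφ
      have hle := cseq_even_le hn2 (le_trans hnle hszφ)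
      have hne : u φ ≠ 2 * (k + 1) := by omega
      have : u (.circ φ) = k + 2 := by rw [hun]; simp [mCirc, hne]
      refine Inv_T (by rw [hw, if_neg (by rw [hwφ]; simp)])
        ⟨1, by omega, by omega, by rw [this, cseq_one]⟩
    | T =>
      obtain ⟨n, hn2, hnle, hcn⟩ := hT hwφ
      have hle := cseq_odd_mem hn2 (le_trans hnle hszφ)
      have hne : u φ ≠ 2 * (k + 1) := by omega
      have : u (.circ φ) = k + 2 := by rw [hun]; simp [mCirc, hne]
      refine Inv_T (by rw [hw, if_neg (by rw [hwφ]; simp)])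
        ⟨1, by omega, by omega, by rw [this, cseq_one]⟩
  | conj φ ψ ihφ ihψ =>
    intro hsz
    have hszs : fsize (Fm.conj φ ψ) = fsize φ + fsize ψ + 1 := rfl
    have hdφ := inv_desig (ihφ (by omega)) (by omega)
    have hdψ := inv_desig (ihψ (by omega)) (by omega)
    have hun : u (.conj φ ψ) = mAnd k (u φ) (u ψ) := hAnd φ ψ
    have hw : wval k u (.conj φ ψ) =
        (if wval k u φ ∈ D5 ∧ wval k u ψ ∈ D5 then V5.t else V5.f) := rfl
    by_cases hc : wval k u φ ∈ D5 ∧ wval k u ψ ∈ D5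
    · have : u (.conj φ ψ) = k + 2 := by
        rw [hun]; simp [mAnd, hdφ.mp hc.1, hdψ.mp hc.2]
      exact Inv_t (by rw [hw, if_pos hc]) (by rw [mem_Dk]; omega) (by omega)
    · have : u (.conj φ ψ) = 1 := by
        rw [hun, mAnd, if_neg]
        intro ⟨h1, h2⟩; exact hc ⟨hdφ.mpr h1, hdψ.mpr h2⟩
      exact Inv_f (by rw [hw, if_neg hc]) (by rw [mem_Dk]; omega)
  | disj φ ψ ihφ ihψ =>
    intro hsz
    have hszs : fsize (Fm.disj φ ψ) = fsize φ + fsize ψ + 1 := rfl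
    have hdφ := inv_desig (ihφ (by omega)) (by omega)
    have hdψ := inv_desig (ihψ (by omega)) (by omega)
    have hun : u (.disj φ ψ) = mOr k (u φ) (u ψ) := hOr φ ψ
    have hw : wval k u (.disj φ ψ) =
        (if wval k u φ ∈ D5 ∨ wval k u ψ ∈ D5 then V5.t else V5.f) := rfl
    by_cases hc : wval k u φ ∈ D5 ∨ wval k u ψ ∈ D5
    · have : u (.disj φ ψ) = k + 2 := by
        rw [hun, mOr, if_neg]
        intro ⟨h1, h2⟩
        rcases hc with h | h
        · exact h1 (hdφ.mp h)
        · exact h2 (hdψ.mp h)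
      exact Inv_t (by rw [hw, if_pos hc]) (by rw [mem_Dk]; omega) (by omega)
    · push_neg at hc
      have h1 : u φ ∉ Dk k := fun h => hc.1 (hdφ.mpr h)
      have h2 : u ψ ∉ Dk k := fun h => hc.2 (hdψ.mpr h)
      have : u (.disj φ ψ) = 1 := by rw [hun]; simp [mOr, h1, h2]
      exact Inv_f (by rw [hw, if_neg (not_or.mpr ⟨hc.1, hc.2⟩)]) (by rw [mem_Dk]; omega)
  | imp φ ψ ihφ ihψ =>
    intro hsz
    have hszs : fsize (Fm.imp φ ψ) = fsize φ + fsize ψ + 1 := rfl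
    have hdφ := inv_desig (ihφ (by omega)) (by omega)
    have hdψ := inv_desig (ihψ (by omega)) (by omega)
    have hun : u (.imp φ ψ) = mImp k (u φ) (u ψ) := hImp φ ψ
    have hw : wval k u (.imp φ ψ) =
        (if wval k u φ ∉ D5 ∨ wval k u ψ ∈ D5 then V5.t else V5.f) := rfl
    by_cases hc : wval k u φ ∉ D5 ∨ wval k u ψ ∈ D5
    · have : u (.imp φ ψ) = k + 2 := by
        rw [hun, mImp, if_neg]
        intro ⟨h1, h2⟩
        rcases hc with h | h
        · exact h (hdφ.mpr h1)
        · exact h2 (hdψ.mp h)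
      exact Inv_t (by rw [hw, if_pos hc]) (by rw [mem_Dk]; omega) (by omega)
    · push_neg at hc
      have : u (.imp φ ψ) = 1 := by
        rw [hun, mImp, if_pos ⟨hdφ.mp hc.1, fun h => hc.2 (hdψ.mpr h)⟩]
      exact Inv_f (by rw [hw, if_neg (by rintro (h | h); exacts [h hc.1, hc.2 h])])
        (by rw [mem_Dk]; omega)

lemma subst_var (φ : Fm) : subst .var φ = φ := by
  induction φ <;> simp_all [subst]

lemma isValMk_comp {k : ℕ} {u : Fm → ℕ} (hu : IsValMk k u) (σ : ℕ → Fm) :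
    IsValMk k (fun φ => u (subst σ φ)) := by
  obtain ⟨h0, h1, h2, h3, h4, h5⟩ := hu
  exact ⟨fun φ => h0 _, fun φ ψ => h1 _ _, fun φ ψ => h2 _ _, fun φ ψ => h3 _ _,
    fun φ => h4 _, fun φ => h5 _⟩

/-- A rule of bounded size that is M_mCi-valid is sound for M_k. -/
lemma rule_sound {k : ℕ} (hk : 1 ≤ k) {Φ Ψ : Finset Fm}
    (hsz : ∀ φ ∈ Φ ∪ Ψ, fsize φ ≤ 2 * k) (hent : Ent5 ↑Φ ↑Ψ)
    (u : Fm → ℕ) (hu : IsValMk k u) (hprem : ∀ ψ ∈ Φ, u ψ ∈ Dk k) :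
    ∃ ω ∈ Ψ, u ω ∈ Dk k := by
  obtain ⟨ω, hω, hdes⟩ := hent (wval k u) (isVal5_wval k u) (by
    intro φ hφ
    rw [Finset.mem_coe] at hφ
    have hs : fsize φ ≤ 2 * k := hsz φ (Finset.mem_union_left _ hφ)
    exact (inv_desig (inv_all hk hu φ hs) hs).mpr (hprem φ hφ))
  rw [Finset.mem_coe] at hω
  have hs : fsize ω ≤ 2 * k := hsz ω (Finset.mem_union_right _ hω)
  exact ⟨ω, hω, (inv_desig (inv_all hk hu ω hs) hs).mp hdes⟩

/-- Soundness of Set-Set derivations w.r.t. M_k, given soundness of the rules. -/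
lemma derss_sound {H : Set RuleSS} {k : ℕ}
    (hrules : ∀ r ∈ H, ∀ u : Fm → ℕ, IsValMk k u →
      (∀ ψ ∈ r.1, u ψ ∈ Dk k) → ∃ ω ∈ r.2, u ω ∈ Dk k)
    {Γ Δ : Set Fm} (h : DerSS H Γ Δ) :
    ∀ u : Fm → ℕ, IsValMk k u → (∀ φ ∈ Γ, u φ ∈ Dk k) → ∃ δ ∈ Δ, u δ ∈ Dk k := by
  induction h with
  | close hΓ hΔ => exact fun u _ hu => ⟨_, hΔ, hu _ hΓ⟩
  | rule r σ hr hant hbr ih =>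
    intro u hu hΓ
    have husub : IsValMk k (fun φ => u (subst σ φ)) := isValMk_comp hu σ
    obtain ⟨ω, hω, hdes⟩ := hrules r hr _ husub (fun ψ hψ => hΓ _ (hant ψ hψ))
    refine ih ω hω u hu ?_
    rintro φ (hφ | hφ)
    · exact hΓ φ hφ
    · rw [Set.mem_singleton_iff] at hφ; subst hφ; exact hdes

/-- Every rule of a system is derivable from itself. -/
lemma triv_der (H : Set RuleSS) (r : RuleSS) (hr : r ∈ H) : DerSS H ↑r.1 ↑r.2 := by
  refine DerSS.rule r .var hr (fun ψ hψ => ?_) (fun ω hω => ?_)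
  · rw [subst_var]; exact Finset.mem_coe.mpr hψ
  · refine DerSS.close (φ := subst Fm.var ω) (Or.inr rfl) ?_
    rw [subst_var]
    exact Finset.mem_coe.mpr hω

/-- A canonical M_k valuation with all variables mapped to the top value. -/
def uval (k : ℕ) : Fm → ℕ
  | .var _ => 2 * (k + 1)
  | .neg φ => mNeg k (uval k φ)
  | .circ φ => mCirc k (uval k φ)
  | .conj φ ψ => mAnd k (uval k φ) (uval k ψ)
  | .disj φ ψ => mOr k (uval k φ) (uval k ψ)
  | .imp φ ψ => mImp k (uval k φ) (uval k ψ)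

lemma isValMk_uval (k : ℕ) : IsValMk k (uval k) := by
  refine ⟨?_, fun _ _ => rfl, fun _ _ => rfl, fun _ _ => rfl, fun _ => rfl, fun _ => rfl⟩
  intro φ
  induction φ with
  | var n => rw [mem_Vk]; show 1 ≤ 2 * (k + 1) ∧ 2 * (k + 1) ≤ 2 * (k + 1); omega
  | neg φ ih =>
    rw [mem_Vk] at ih ⊢
    show 1 ≤ mNeg k (uval k φ) ∧ mNeg k (uval k φ) ≤ 2 * (k + 1)
    simp only [mNeg]; split_ifs <;> omega
  | circ φ ih =>
    rw [mem_Vk]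
    show 1 ≤ mCirc k (uval k φ) ∧ mCirc k (uval k φ) ≤ 2 * (k + 1)
    simp only [mCirc]; split_ifs <;> omega
  | conj φ ψ ihφ ihψ =>
    rw [mem_Vk]
    show 1 ≤ mAnd k (uval k φ) (uval k ψ) ∧ mAnd k (uval k φ) (uval k ψ) ≤ 2 * (k + 1)
    simp only [mAnd]; split_ifs <;> omega
  | disj φ ψ ihφ ihψ =>
    rw [mem_Vk]
    show 1 ≤ mOr k (uval k φ) (uval k ψ) ∧ mOr k (uval k φ) (uval k ψ) ≤ 2 * (k + 1)
    simp only [mOr]; split_ifs <;> omega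
  | imp φ ψ ihφ ihψ =>
    rw [mem_Vk]
    show 1 ≤ mImp k (uval k φ) (uval k ψ) ∧ mImp k (uval k φ) (uval k ψ) ≤ 2 * (k + 1)
    simp only [mImp]; split_ifs <;> omega

lemma uval_negIter (k : ℕ) (hk : 1 ≤ k) :
    ∀ j : ℕ, uval k (negIter j (.circ (.var 0))) = cseq k j := by
  intro j
  induction j with
  | zero =>
    show mCirc k (uval k (.var 0)) = 1
    show mCirc k (2 * (k + 1)) = 1
    simp [mCirc]
  | succ j ih =>
    show mNeg k (uval k (negIter j (.circ (.var 0)))) = mNeg k (cseq k j)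
    rw [ih]

lemma uval_cij (k : ℕ) (hk : 1 ≤ k) : uval k (cij (2 * k + 1)) = 1 := by
  show mCirc k (uval k (negIter (2 * k + 1) (.circ (.var 0)))) = 1
  rw [uval_negIter k hk]
  have h := (cseq_spec k k le_rfl).2
  rw [h]
  simp only [mCirc]
  split_ifs <;> omega

/-- Every formula ∘¬ʲ∘p is valid in M_mCi. -/
lemma ent5_cij (j : ℕ) : Ent5 ∅ {cij j} := by
  intro v hv _
  obtain ⟨hAnd, hOr, hImp, hNeg, hCirc⟩ := hv
  have key : ∀ m : ℕ, v (negIter m (.circ (.var 0))) = V5.F ∨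
      v (negIter m (.circ (.var 0))) = V5.T := by
    intro m
    induction m with
    | zero =>
      have h0 := hCirc (.var 0)
      show v (.circ (.var 0)) = V5.F ∨ v (.circ (.var 0)) = V5.T
      cases h : v (.var 0) <;> rw [h] at h0 <;> simp [nCirc] at h0 <;> simp [h0]
    | succ m ih =>
      have h0 := hNeg (negIter m (.circ (.var 0)))
      show v (.neg (negIter m (.circ (.var 0)))) = V5.F ∨
        v (.neg (negIter m (.circ (.var 0)))) = V5.T
      rcases ih with h | h <;> rw [h] at h0 <;> simp [nNeg] at h0 <;> simp [h0]
  refine ⟨cij j, rfl, ?_⟩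
  have h0 := hCirc (negIter j (.circ (.var 0)))
  show v (.circ (negIter j (.circ (.var 0)))) ∈ D5
  rcases key j with h | h <;> rw [h] at h0 <;> simp [nCirc] at h0 <;> rw [h0] <;> simp [D5]

end Stmt16Aux
/-- mCi is not axiomatizable by a finite Set-Set Hilbert system,
assuming the Set-Fmla companion of ⊩_{M_mCi} coincides with ⊢_{H_mCi}. -/
theorem stmt16 (B : Set Rule) (hBfin : B.Finite)
    (hpos : ∀ r ∈ B, (∀ ψ ∈ r.1, Positive ψ) ∧ Positive r.2)
    (hsnd : ∀ r ∈ B, SoundB2 r)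
    (hcomp : ∀ (Γ : Set Fm) (φ : Fm), Ent5 Γ {φ} ↔ Derives (HmCi B) Γ φ) :
    ¬ ∃ H : Set RuleSS, H.Finite ∧ ∀ Γ Δ : Set Fm, DerSS H Γ Δ ↔ Ent5 Γ Δ := by
  rintro ⟨H, hHfin, hiff⟩
  classical
  set N := hHfin.toFinset.sup (fun r => (r.1 ∪ r.2).sup Stmt16Aux.fsize) with hN
  set k := N + 1 with hkdef
  have hk : 1 ≤ k := by omega
  have hsz : ∀ r ∈ H, ∀ φ ∈ r.1 ∪ r.2, Stmt16Aux.fsize φ ≤ 2 * k := by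
    intro r hr φ hφ
    have h1 : Stmt16Aux.fsize φ ≤ (r.1 ∪ r.2).sup Stmt16Aux.fsize := Finset.le_sup hφ
    have h2 : (r.1 ∪ r.2).sup Stmt16Aux.fsize ≤ N :=
      Finset.le_sup (f := fun r : RuleSS => (r.1 ∪ r.2).sup Stmt16Aux.fsize)
        (hHfin.mem_toFinset.mpr hr)
    omega
  have hrules : ∀ r ∈ H, ∀ u : Fm → ℕ, IsValMk k u →
      (∀ ψ ∈ r.1, u ψ ∈ Dk k) → ∃ ω ∈ r.2, u ω ∈ Dk k := by
    intro r hr u hu hprem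
    exact Stmt16Aux.rule_sound hk (hsz r hr)
      ((hiff _ _).mp (Stmt16Aux.triv_der H r hr)) u hu hprem
  have hder : DerSS H ∅ {cij (2 * k + 1)} := (hiff _ _).mpr (Stmt16Aux.ent5_cij _)
  obtain ⟨δ, hδ, hdes⟩ := Stmt16Aux.derss_sound hrules hder (Stmt16Aux.uval k)
    (Stmt16Aux.isValMk_uval k) (fun φ h => absurd h (Set.notMem_empty φ))
  rw [Set.mem_singleton_iff] at hδ
  subst hδ
  rw [Stmt16Aux.uval_cij k hk] at hdes
  rw [Stmt16Aux.mem_Dk] at hdes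
  omega
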